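/- Planner-aware ELBO for P2-style planners: let V, D and the P2 planner G_2 = {G^k_2}_{k=1}^L be as below, let p^{G_2}(x_0) be the probability that P2 planner-guided sampling produces x_0 (a sequence with no masks), and let r^{G_2}_k(·; x_0) be the step-k law of the reference chain Y^{x_0}. Then log p^{G_2}(x_0) ≥ 𝓔_1(x_0) + 𝓔_2(x_0), where 𝓔_1(x_0) = Σ_{k=0}^{L-1} E_{x_k ~ r^{G_2}_k(·;x_0)}[ Σ_{y ∈ 𝓧_{L-k-1}(x_0)} Cat( C(y); G^{k+1}_2(x_0, x_k) ) · Σ_{i ∈ C(y)} log Cat( x_0^i; D^i(x_k) ) ] and 𝓔_2(x_0) = − Σ_{k=0}^{L-1} E_{x_k ~ r^{G_2}_k(·;x_0)}[ Σ_{y ∈ 𝓧_{L-k-1}(x_0)} Cat( C(y); G^{k+1}_2(x_0, x_k) ) · log( Cat( C(y); G^{k+1}_2(x_0, x_k) ) / F^{k+1}(x_k, y) ) ], with F^{k+1}(x, y) = E_{z ~ D(x)}[ Cat( C(y); G^{k+1}_2(z^{-y}, x) ) ]. -/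

import Mathlib

/-!
Write `p^{G₂}(x₀)` as the backward function `chainExpect` of the sampling chain, evaluated at the
fully masked sequence, and use the reference chain `Y^{x₀}` as a proposal over unmasking paths.
Gibbs' inequality (concavity of `log`), applied one step at a time along `Y^{x₀}`, bounds
`log p^{G₂}(x₀)` below by the expected sum of `log (K(x, y) / Cat(C(y); G₂(x₀, x)))` for any
sub-kernel `K` of the sampling kernel that is positive wherever `Y^{x₀}` moves. The choice
`K(x, y) = ∏_{i ∈ C(y)} D^i(x)(x₀^i) · F(x, y)` (the denoiser proposes `x₀` on `C(y)`, then the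
planner selects exactly `C(y)`, the proposals outside `C(y)` being averaged out) splits the bound
into `𝓔₁ + 𝓔₂`.
-/

open Finset

/-- `C(y)`: the set of unmasked coordinates of `y`. -/
def unmaskedSet {V : Type*} [Fintype V] [DecidableEq V] {L : ℕ}
    (mask : V) (y : Fin L → V) : Finset (Fin L) :=
  Finset.univ.filter (fun i : Fin L => y i ≠ mask)

/-- The sequence keeping the coordinates of `z` on `S` and masking all others. -/
def maskedWith {V : Type*} {L : ℕ}
    (mask : V) (z : Fin L → V) (S : Finset (Fin L)) : Fin L → V :=
  fun i => if i ∈ S then z i else mask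

/-- `z^{-y}`: the sequence `z` with `z^i` replaced by `y^i` for every `i ∈ C(y)`. -/
def mergeOn {V : Type*} [DecidableEq V] {L : ℕ}
    (mask : V) (z y : Fin L → V) : Fin L → V :=
  fun i => if y i ≠ mask then y i else z i

/-- `N_M(x)`: the number of masked coordinates of `x`. -/
def NMask {V : Type*} [Fintype V] [DecidableEq V] {L : ℕ}
    (mask : V) (x : Fin L → V) : ℕ :=
  (Finset.univ.filter (fun i : Fin L => x i = mask)).card

/-- `𝓧_j(x₀)`: the set of sequences equal to `x₀` except that exactly `j` coordinates
are replaced by the mask symbol. -/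
def XSet {V : Type*} [Fintype V] [DecidableEq V] {L : ℕ}
    (mask : V) (x0 : Fin L → V) (j : ℕ) : Finset (Fin L → V) :=
  Finset.univ.filter (fun x : Fin L → V =>
    (∀ i, x i = x0 i ∨ x i = mask) ∧ NMask mask x = j)

/-- `F^{k}(x, y) = E_{z ~ D(x)}[ Cat(C(y); G₂^{k}(z^{-y}, x)) ]`. -/
noncomputable def FP2 {V : Type*} [Fintype V] [DecidableEq V] {L : ℕ}
    (D : (Fin L → V) → Fin L → V → ℝ)
    (G2 : ℕ → (Fin L → V) → (Fin L → V) → Finset (Fin L) → ℝ)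
    (mask : V) (k : ℕ) (x y : Fin L → V) : ℝ :=
  ∑ z : Fin L → V, (∏ j, D x j (z j)) * G2 k (mergeOn mask z y) x (unmaskedSet mask y)

/-- One step of P2 planner-guided sampling after step `k`. -/
noncomputable def p2Kernel {V : Type*} [Fintype V] [DecidableEq V] {L : ℕ}
    (D : (Fin L → V) → Fin L → V → ℝ)
    (G2 : ℕ → (Fin L → V) → (Fin L → V) → Finset (Fin L) → ℝ)
    (mask : V) (k : ℕ) (x w : Fin L → V) : ℝ :=
  ∑ z : Fin L → V, (∏ j, D x j (z j)) *
    ∑ S ∈ Finset.univ.filter (fun S : Finset (Fin L) => maskedWith mask z S = w),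
      G2 (k + 1) z x S

/-- The distribution of the state after `k` steps of P2 planner-guided sampling,
starting from the fully masked sequence; `p2Dist D G2 mask L` is `p^{G₂}`. -/
noncomputable def p2Dist {V : Type*} [Fintype V] [DecidableEq V] {L : ℕ}
    (D : (Fin L → V) → Fin L → V → ℝ)
    (G2 : ℕ → (Fin L → V) → (Fin L → V) → Finset (Fin L) → ℝ)
    (mask : V) : ℕ → (Fin L → V) → ℝ
  | 0, w => if w = (fun _ => mask) then (1 : ℝ) else 0
  | k + 1, w => ∑ x : Fin L → V, p2Dist D G2 mask k x * p2Kernel D G2 mask k x w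

/-- The step-`k` law `r^{G₂}_k(·; x₀)` of the reference chain `Y^{x₀}`: starting from
the fully masked sequence, at step `k` it moves to `y ∈ 𝓧_{L-k-1}(x₀)` with
probability `Cat(C(y); G₂^{k+1}(x₀, Y_k))`. -/
noncomputable def refDistP2 {V : Type*} [Fintype V] [DecidableEq V] {L : ℕ}
    (G2 : ℕ → (Fin L → V) → (Fin L → V) → Finset (Fin L) → ℝ)
    (mask : V) (x0 : Fin L → V) : ℕ → (Fin L → V) → ℝ
  | 0, w => if w = (fun _ => mask) then (1 : ℝ) else 0
  | k + 1, w =>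
      if w ∈ XSet mask x0 (L - (k + 1)) then
        ∑ x : Fin L → V, refDistP2 G2 mask x0 k x * G2 (k + 1) x0 x (unmaskedSet mask w)
      else 0

theorem Real.sum_mul_log_sub_log_le_log_sum {ι : Type*} (t : Finset ι) {q a : ι → ℝ}
    (hq : ∀ i ∈ t, 0 ≤ q i) (hq1 : ∑ i ∈ t, q i = 1) (ha : ∀ i ∈ t, 0 ≤ a i)
    (hqa : ∀ i ∈ t, 0 < q i → 0 < a i) :
    ∑ i ∈ t, q i * (Real.log (a i) - Real.log (q i)) ≤ Real.log (∑ i ∈ t, a i) := by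
  set t' := t.filter (fun i => 0 < q i)
  have hsub : t' ⊆ t := filter_subset _ _
  have hq0 : ∀ i ∈ t, i ∉ t' → q i = 0 := fun i hi hi' =>
    le_antisymm (not_lt.1 fun h => hi' (mem_filter.2 ⟨hi, h⟩)) (hq i hi)
  have hq1' : ∑ i ∈ t', q i = 1 := by
    rwa [sum_subset hsub hq0]
  have hpos : 0 < ∑ i ∈ t', a i :=
    sum_pos (fun j hj => hqa j (mem_filter.1 hj).1 (mem_filter.1 hj).2)
      (nonempty_of_sum_ne_zero (hq1'.trans_ne one_ne_zero))
  calc ∑ i ∈ t, q i * (Real.log (a i) - Real.log (q i))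
      = ∑ i ∈ t', q i • Real.log (a i / q i) := by
        rw [← sum_subset hsub fun i hi hi' => by simp [hq0 i hi hi']]
        refine sum_congr rfl fun i hi => ?_
        obtain ⟨hit, hqi⟩ := mem_filter.1 hi
        rw [smul_eq_mul, Real.log_div (hqa i hit hqi).ne' hqi.ne']
    _ ≤ Real.log (∑ i ∈ t', q i • (a i / q i)) :=
        strictConcaveOn_log_Ioi.concaveOn.le_map_sum (fun i hi => (mem_filter.1 hi).2.le) hq1'
          fun i hi => div_pos (hqa i (mem_filter.1 hi).1 (mem_filter.1 hi).2) (mem_filter.1 hi).2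
    _ = Real.log (∑ i ∈ t', a i) := by
        congr 1
        exact sum_congr rfl fun i hi => by
          rw [smul_eq_mul, mul_div_cancel₀ _ (mem_filter.1 hi).2.ne']
    _ ≤ Real.log (∑ i ∈ t, a i) :=
        Real.log_le_log hpos (sum_le_sum_of_subset_of_nonneg hsub
          fun i hi _ => ha i hi)

section ChainElbo

variable {α : Type*} [Fintype α]

noncomputable def chainExpect (K : ℕ → α → α → ℝ) (f : α → ℝ) : ℕ → ℕ → α → ℝ
  | _, 0, x => f x
  | k, m + 1, x => ∑ w, K k x w * chainExpect K f (k + 1) m w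

variable {K K' : ℕ → α → α → ℝ} {f : α → ℝ}

theorem chainExpect_succ (k m : ℕ) (x : α) :
    chainExpect K f k (m + 1) x = ∑ w, K k x w * chainExpect K f (k + 1) m w := rfl

theorem sum_mul_chainExpect {μ : ℕ → α → ℝ} (hμ : ∀ k w, μ (k + 1) w = ∑ x, μ k x * K k x w)
    (m k : ℕ) : ∑ x, μ k x * chainExpect K f k m x = ∑ x, μ (k + m) x * f x := by
  induction m generalizing k with
  | zero => rfl
  | succ m ih =>
    simp_rw [chainExpect_succ, mul_sum]
    rw [sum_comm, show k + (m + 1) = k + 1 + m by omega, ← ih (k + 1)]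
    simp_rw [hμ, sum_mul, mul_assoc]

theorem chainExpect_nonneg (hK : ∀ k x w, 0 ≤ K k x w) (hf : ∀ x, 0 ≤ f x) (m k : ℕ) (x : α) :
    0 ≤ chainExpect K f k m x := by
  induction m generalizing k x with
  | zero => exact hf x
  | succ m ih => exact sum_nonneg fun w _ => mul_nonneg (hK k x w) (ih (k + 1) w)

theorem chainExpect_mono (hK' : ∀ k x w, 0 ≤ K' k x w) (hKK' : ∀ k x w, K' k x w ≤ K k x w)
    (hf : ∀ x, 0 ≤ f x) (m k : ℕ) (x : α) :
    chainExpect K' f k m x ≤ chainExpect K f k m x := by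
  induction m generalizing k x with
  | zero => rfl
  | succ m ih =>
    refine sum_le_sum fun w _ => mul_le_mul (hKK' k x w) (ih (k + 1) w)
      (chainExpect_nonneg hK' hf m (k + 1) w) ((hK' k x w).trans (hKK' k x w))

variable {r : ℕ → α → ℝ} {Q : ℕ → α → α → ℝ} {n : ℕ}

theorem mul_le_forward_succ (hr : ∀ k x, 0 ≤ r k x) (hQ : ∀ k x w, 0 ≤ Q k x w)
    (hrQ : ∀ k w, r (k + 1) w = ∑ x, r k x * Q k x w) (k : ℕ) (x w : α) :
    r k x * Q k x w ≤ r (k + 1) w :=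
  hrQ k w ▸ single_le_sum (fun y _ => mul_nonneg (hr k y) (hQ k y w)) (mem_univ x)

theorem chainExpect_pos (hr : ∀ k x, 0 ≤ r k x) (hQ : ∀ k x w, 0 ≤ Q k x w)
    (hQsum : ∀ k < n, ∀ x, ∑ w, Q k x w = 1) (hrQ : ∀ k w, r (k + 1) w = ∑ x, r k x * Q k x w)
    (hK : ∀ k x w, 0 ≤ K k x w) (hf : ∀ x, 0 ≤ f x)
    (hKpos : ∀ k < n, ∀ x w, 0 < r k x → 0 < Q k x w → 0 < K k x w)
    (hfpos : ∀ x, 0 < r n x → 0 < f x) (m k : ℕ) (hkm : k + m = n) (x : α) (hx : 0 < r k x) :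
    0 < chainExpect K f k m x := by
  induction m generalizing k x with
  | zero => exact hfpos x (hkm ▸ hx)
  | succ m ih =>
    have hk : k < n := by omega
    obtain ⟨w, -, hw⟩ := exists_ne_zero_of_sum_ne_zero ((hQsum k hk x).trans_ne one_ne_zero)
    have hQw : 0 < Q k x w := (hQ k x w).lt_of_ne' hw
    have hrw : 0 < r (k + 1) w := (mul_pos hx hQw).trans_le (mul_le_forward_succ hr hQ hrQ k x w)
    exact sum_pos' (fun w _ => mul_nonneg (hK k x w) (chainExpect_nonneg hK hf m (k + 1) w))
      ⟨w, mem_univ w, mul_pos (hKpos k hk x w hx hQw) (ih (k + 1) (by omega) w hrw)⟩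

theorem sum_mul_log_chainExpect_ge (hr : ∀ k x, 0 ≤ r k x) (hQ : ∀ k x w, 0 ≤ Q k x w)
    (hQsum : ∀ k < n, ∀ x, ∑ w, Q k x w = 1) (hrQ : ∀ k w, r (k + 1) w = ∑ x, r k x * Q k x w)
    (hK : ∀ k x w, 0 ≤ K k x w) (hf : ∀ x, 0 ≤ f x)
    (hKpos : ∀ k < n, ∀ x w, 0 < r k x → 0 < Q k x w → 0 < K k x w)
    (hfpos : ∀ x, 0 < r n x → 0 < f x) :
    ∑ k ∈ range n, ∑ x, r k x * ∑ w, Q k x w * (Real.log (K k x w) - Real.log (Q k x w))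
        + ∑ x, r n x * Real.log (f x)
      ≤ ∑ x, r 0 x * Real.log (chainExpect K f 0 n x) := by
  suffices h : ∀ m k, k + m = n →
      ∑ i ∈ Ico k n, ∑ x, r i x * ∑ w, Q i x w * (Real.log (K i x w) - Real.log (Q i x w))
        + ∑ x, r n x * Real.log (f x)
      ≤ ∑ x, r k x * Real.log (chainExpect K f k m x) by
    rw [range_eq_Ico]
    exact h n 0 (zero_add n)
  intro m
  induction m with
  | zero => intro k hk; simp [chainExpect, ← hk]
  | succ m ih =>
    intro k hkm
    have hk : k < n := by omega
    set B := chainExpect K f (k + 1) m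
    have hB : ∀ w, 0 ≤ B w := chainExpect_nonneg hK hf m (k + 1)
    have hstep : ∀ x, 0 < r k x →
        ∑ w, Q k x w * (Real.log (K k x w) - Real.log (Q k x w))
          + ∑ w, Q k x w * Real.log (B w) ≤ Real.log (∑ w, K k x w * B w) := by
      intro x hx
      have hKB : ∀ w, 0 < Q k x w → 0 < K k x w ∧ 0 < B w := fun w hw =>
        ⟨hKpos k hk x w hx hw, chainExpect_pos hr hQ hQsum hrQ hK hf hKpos hfpos m (k + 1)
          (by omega) w ((mul_pos hx hw).trans_le (mul_le_forward_succ hr hQ hrQ k x w))⟩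
      rw [← sum_add_distrib]
      refine le_of_eq_of_le (sum_congr rfl fun w _ => ?_)
        (Real.sum_mul_log_sub_log_le_log_sum univ (fun w _ => hQ k x w) (hQsum k hk x)
          (fun w _ => mul_nonneg (hK k x w) (hB w)) fun w _ hw => mul_pos (hKB w hw).1 (hKB w hw).2)
      rcases (hQ k x w).eq_or_lt with hw | hw
      · simp [← hw]
      rw [Real.log_mul (hKB w hw).1.ne' (hKB w hw).2.ne']
      ring
    calc ∑ i ∈ Ico k n, ∑ x, r i x * ∑ w, Q i x w * (Real.log (K i x w) - Real.log (Q i x w))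
          + ∑ x, r n x * Real.log (f x)
        ≤ ∑ x, r k x * ∑ w, Q k x w * (Real.log (K k x w) - Real.log (Q k x w))
          + ∑ w, r (k + 1) w * Real.log (B w) := by
          rw [sum_eq_sum_Ico_succ_bot hk, add_assoc]
          exact add_le_add_right (ih (k + 1) (by omega)) _
      _ = ∑ x, r k x * (∑ w, Q k x w * (Real.log (K k x w) - Real.log (Q k x w))
          + ∑ w, Q k x w * Real.log (B w)) := by
          simp_rw [hrQ, sum_mul, mul_add, sum_add_distrib, mul_sum, mul_assoc]
          exact congrArg _ sum_comm
      _ ≤ ∑ x, r k x * Real.log (chainExpect K f k (m + 1) x) := by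
          refine sum_le_sum fun x _ => ?_
          rcases (hr k x).eq_or_lt with hx | hx
          · simp [← hx]
          exact mul_le_mul_of_nonneg_left (hstep x hx) hx.le

end ChainElbo

section ProductMeasure

variable {ι V : Type*} [Fintype ι] [DecidableEq ι] [Fintype V] [DecidableEq V] {D : ι → V → ℝ}

theorem sum_prod_filter_eqOn_compl (hD : ∀ i, ∑ v, D i v = 1) (C : Finset ι) (y : ι → V) :
    ∑ z ∈ univ.filter (fun z : ι → V => ∀ i ∉ C, z i = y i), ∏ i, D i (z i)
      = ∏ i ∈ Cᶜ, D i (y i) := by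
  have hfilter : univ.filter (fun z : ι → V => ∀ i ∉ C, z i = y i)
      = Fintype.piFinset fun i => if i ∈ C then univ else {y i} := by
    ext z
    simp only [mem_filter, mem_univ, true_and, Fintype.mem_piFinset]
    exact forall_congr' fun i => by by_cases hi : i ∈ C <;> simp [hi]
  rw [hfilter, ← prod_univ_sum, ← prod_mul_prod_compl C]
  have hC : ∀ i ∈ C, ∑ v ∈ (if i ∈ C then univ else {y i}), D i v = 1 := fun i hi => by
    simp [hi, hD]
  have hCc : ∀ i ∈ Cᶜ, ∑ v ∈ (if i ∈ C then univ else {y i}), D i v = D i (y i) := fun i hi => by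
    simp [mem_compl.1 hi]
  rw [prod_congr rfl hC, prod_congr rfl hCc, prod_const_one, one_mul]

theorem prod_mul_sum_prod_piecewise (hD : ∀ i, ∑ v, D i v = 1) (C : Finset ι) (w : ι → V)
    (g : (ι → V) → ℝ) :
    (∏ i ∈ C, D i (w i)) * ∑ z, (∏ i, D i (z i)) * g (C.piecewise w z)
      = ∑ z ∈ univ.filter (fun z : ι → V => ∀ i ∈ C, z i = w i), (∏ i, D i (z i)) * g z := by
  rw [mul_sum, ← sum_fiberwise_of_maps_to (g := fun z => C.piecewise w z)
    (t := univ.filter (fun z : ι → V => ∀ i ∈ C, z i = w i))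
    fun z _ => mem_filter.2 ⟨mem_univ _, fun i hi => C.piecewise_eq_of_mem _ _ hi⟩]
  refine sum_congr rfl fun y hy => ?_
  have hyC := (mem_filter.1 hy).2
  have hfiber : univ.filter (fun z : ι → V => C.piecewise w z = y)
      = univ.filter (fun z : ι → V => ∀ i ∉ C, z i = y i) := by
    ext z
    simp only [mem_filter, mem_univ, true_and, funext_iff]
    refine ⟨fun h i hi => by rw [← h i, C.piecewise_eq_of_notMem _ _ hi], fun h i => ?_⟩
    by_cases hi : i ∈ C
    · rw [C.piecewise_eq_of_mem _ _ hi, hyC i hi]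
    · rw [C.piecewise_eq_of_notMem _ _ hi, h i hi]
  have hprod : ∏ i ∈ C, D i (w i) = ∏ i ∈ C, D i (y i) :=
    prod_congr rfl fun i hi => by rw [hyC i hi]
  calc ∑ z ∈ univ.filter (fun z : ι → V => C.piecewise w z = y),
        (∏ i ∈ C, D i (w i)) * ((∏ i, D i (z i)) * g (C.piecewise w z))
      = (∏ i ∈ C, D i (y i)) * (∑ z ∈ univ.filter (fun z : ι → V => ∀ i ∉ C, z i = y i),
          ∏ i, D i (z i)) * g y := by
        rw [← hfiber, hprod, mul_assoc, sum_mul, mul_sum]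
        exact sum_congr rfl fun z hz => by rw [(mem_filter.1 hz).2]
    _ = (∏ i, D i (y i)) * g y := by rw [sum_prod_filter_eqOn_compl hD, prod_mul_prod_compl]

end ProductMeasure

section MaskedSequences

variable {V : Type*} [Fintype V] [DecidableEq V] {L : ℕ} {mask : V} {x0 : Fin L → V}

@[simp]
theorem mem_unmaskedSet {y : Fin L → V} {i : Fin L} : i ∈ unmaskedSet mask y ↔ y i ≠ mask := by
  simp [unmaskedSet]

theorem eq_of_mem_XSet_of_mem_unmaskedSet {j : ℕ} {w : Fin L → V} (hw : w ∈ XSet mask x0 j)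
    {i : Fin L} (hi : i ∈ unmaskedSet mask w) : w i = x0 i :=
  ((mem_filter.1 hw).2.1 i).resolve_right (mem_unmaskedSet.1 hi)

theorem card_unmaskedSet_of_mem_XSet {j : ℕ} {w : Fin L → V} (hw : w ∈ XSet mask x0 j) :
    (unmaskedSet mask w).card = L - j := by
  have hj : (univ.filter fun i => w i = mask).card = j := (mem_filter.1 hw).2.2
  have hsplit :=
    card_filter_add_card_filter_not (s := (univ : Finset (Fin L))) (fun i => w i = mask)
  rw [card_univ, Fintype.card_fin] at hsplit
  simp only [unmaskedSet, ne_eq]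
  omega

theorem eq_of_mem_XSet_zero {w : Fin L → V} (hw : w ∈ XSet mask x0 0) : w = x0 := by
  have hC : unmaskedSet mask w = univ := by
    rw [← card_eq_iff_eq_univ, card_unmaskedSet_of_mem_XSet hw, Fintype.card_fin, Nat.sub_zero]
  exact funext fun i => eq_of_mem_XSet_of_mem_unmaskedSet hw (hC ▸ mem_univ i)

theorem maskedWith_mem_XSet (hx0 : ∀ i, x0 i ≠ mask) {j : ℕ} (hj : j ≤ L) {S : Finset (Fin L)}
    (hS : S.card = L - j) : maskedWith mask x0 S ∈ XSet mask x0 j := by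
  refine mem_filter.2 ⟨mem_univ _, fun i => ?_, ?_⟩
  · by_cases hi : i ∈ S <;> simp [maskedWith, hi]
  · have hmasked : (univ.filter fun i => maskedWith mask x0 S i = mask) = Sᶜ := by
      ext i
      by_cases hi : i ∈ S <;> simp [maskedWith, hi, hx0 i]
    rw [NMask, hmasked, card_compl, Fintype.card_fin, hS]
    omega

theorem unmaskedSet_maskedWith (hx0 : ∀ i, x0 i ≠ mask) (S : Finset (Fin L)) :
    unmaskedSet mask (maskedWith mask x0 S) = S := by
  ext i
  by_cases hi : i ∈ S <;> simp [maskedWith, hi, hx0 i]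

theorem maskedWith_unmaskedSet_of_eqOn {z w : Fin L → V}
    (hzw : ∀ i ∈ unmaskedSet mask w, z i = w i) : maskedWith mask z (unmaskedSet mask w) = w := by
  funext i
  by_cases hi : i ∈ unmaskedSet mask w
  · simp [maskedWith, hi, hzw i hi]
  · simp only [maskedWith, hi, if_false]
    exact (not_not.1 (mt mem_unmaskedSet.2 hi)).symm

theorem sum_XSet_eq_sum_card (hx0 : ∀ i, x0 i ≠ mask) {j : ℕ} (hj : j ≤ L)
    (g : Finset (Fin L) → ℝ) :
    ∑ w ∈ XSet mask x0 j, g (unmaskedSet mask w)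
      = ∑ S ∈ univ.filter (fun S : Finset (Fin L) => S.card = L - j), g S :=
  sum_nbij' (unmaskedSet mask) (maskedWith mask x0)
    (fun _ hw => mem_filter.2 ⟨mem_univ _, card_unmaskedSet_of_mem_XSet hw⟩)
    (fun _ hS => maskedWith_mem_XSet hx0 hj (mem_filter.1 hS).2)
    (fun _ hw => maskedWith_unmaskedSet_of_eqOn fun _ hi =>
      (eq_of_mem_XSet_of_mem_unmaskedSet hw hi).symm)
    (fun S _ => unmaskedSet_maskedWith hx0 S) fun _ _ => rfl

theorem mergeOn_eq_piecewise (z y : Fin L → V) :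
    mergeOn mask z y = (unmaskedSet mask y).piecewise y z := by
  funext i
  by_cases hi : y i = mask <;> simp [mergeOn, Finset.piecewise, hi]

end MaskedSequences

section P2Chains

variable {V : Type*} [Fintype V] [DecidableEq V] {L : ℕ} {mask : V} {x0 : Fin L → V}
  {D : (Fin L → V) → Fin L → V → ℝ} {G2 : ℕ → (Fin L → V) → (Fin L → V) → Finset (Fin L) → ℝ}

noncomputable def refKernelP2 (G2 : ℕ → (Fin L → V) → (Fin L → V) → Finset (Fin L) → ℝ)
    (mask : V) (x0 : Fin L → V) (k : ℕ) (x w : Fin L → V) : ℝ :=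
  if w ∈ XSet mask x0 (L - k - 1) then G2 (k + 1) x0 x (unmaskedSet mask w) else 0

theorem refKernelP2_nonneg (hG20 : ∀ k z x S, 0 ≤ G2 k z x S) (k : ℕ) (x w : Fin L → V) :
    0 ≤ refKernelP2 G2 mask x0 k x w := by
  unfold refKernelP2
  split_ifs
  exacts [hG20 _ _ _ _, le_rfl]

theorem sum_refKernelP2 (hG2card : ∀ k z x S, G2 k z x S ≠ 0 → S.card = k)
    (hG2sum : ∀ k z x, 1 ≤ k → k ≤ L → ∑ S : Finset (Fin L), G2 k z x S = 1)
    (hx0 : ∀ i, x0 i ≠ mask) {k : ℕ} (hk : k < L) (x : Fin L → V) :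
    ∑ w, refKernelP2 G2 mask x0 k x w = 1 := by
  simp only [refKernelP2]
  rw [Fintype.sum_ite_mem, sum_XSet_eq_sum_card hx0 (by omega) (G2 (k + 1) x0 x),
    show L - (L - k - 1) = k + 1 by omega, sum_filter_of_ne fun S _ => hG2card _ _ _ S]
  exact hG2sum _ _ _ (by omega) (by omega)

theorem refDistP2_succ_eq_sum (k : ℕ) (w : Fin L → V) :
    refDistP2 G2 mask x0 (k + 1) w
      = ∑ x, refDistP2 G2 mask x0 k x * refKernelP2 G2 mask x0 k x w := by
  simp only [refDistP2, refKernelP2, Nat.sub_sub]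
  split_ifs <;> simp

theorem refDistP2_nonneg (hG20 : ∀ k z x S, 0 ≤ G2 k z x S) (k : ℕ) (x : Fin L → V) :
    0 ≤ refDistP2 G2 mask x0 k x := by
  induction k generalizing x with
  | zero => unfold refDistP2; split_ifs <;> norm_num
  | succ k ih =>
    rw [refDistP2_succ_eq_sum]
    exact sum_nonneg fun y _ => mul_nonneg (ih y) (refKernelP2_nonneg hG20 k y x)

theorem eq_of_refDistP2_ne_zero {x : Fin L → V} (hx : refDistP2 G2 mask x0 L x ≠ 0) : x = x0 := by
  cases L with
  | zero => exact Subsingleton.elim _ _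
  | succ L =>
    rw [refDistP2] at hx
    split_ifs at hx with hmem
    · exact eq_of_mem_XSet_zero (Nat.sub_self _ ▸ hmem)
    · exact absurd rfl hx

noncomputable def p2LowerKernel (D : (Fin L → V) → Fin L → V → ℝ)
    (G2 : ℕ → (Fin L → V) → (Fin L → V) → Finset (Fin L) → ℝ)
    (mask : V) (k : ℕ) (x w : Fin L → V) : ℝ :=
  (∏ i ∈ unmaskedSet mask w, D x i (w i)) * FP2 D G2 mask (k + 1) x w

theorem p2LowerKernel_nonneg (hD0 : ∀ x i y, 0 ≤ D x i y) (hG20 : ∀ k z x S, 0 ≤ G2 k z x S)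
    (k : ℕ) (x w : Fin L → V) : 0 ≤ p2LowerKernel D G2 mask k x w :=
  mul_nonneg (prod_nonneg fun i _ => hD0 x i (w i))
    (sum_nonneg fun z _ => mul_nonneg (prod_nonneg fun j _ => hD0 x j (z j)) (hG20 _ _ _ _))

theorem p2LowerKernel_le_p2Kernel (hD0 : ∀ x i y, 0 ≤ D x i y) (hD1 : ∀ x i, ∑ y, D x i y = 1)
    (hG20 : ∀ k z x S, 0 ≤ G2 k z x S) (k : ℕ) (x w : Fin L → V) :
    p2LowerKernel D G2 mask k x w ≤ p2Kernel D G2 mask k x w := by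
  rw [p2LowerKernel, FP2]
  simp_rw [mergeOn_eq_piecewise]
  rw [prod_mul_sum_prod_piecewise (hD1 x) _ w fun z => G2 (k + 1) z x (unmaskedSet mask w),
    p2Kernel]
  refine (sum_le_sum fun z hz => ?_).trans (sum_le_sum_of_subset_of_nonneg (subset_univ _)
    fun z _ _ => mul_nonneg (prod_nonneg fun j _ => hD0 x j (z j))
      (sum_nonneg fun S _ => hG20 _ _ _ _))
  refine mul_le_mul_of_nonneg_left ?_ (prod_nonneg fun j _ => hD0 x j (z j))
  exact single_le_sum (f := fun S => G2 (k + 1) z x S) (fun S _ => hG20 _ _ _ _)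
    (mem_filter.2 ⟨mem_univ _, maskedWith_unmaskedSet_of_eqOn (by simpa using hz)⟩)

theorem p2Dist_eq_chainExpect (x0 : Fin L → V) :
    p2Dist D G2 mask L x0
      = chainExpect (p2Kernel D G2 mask) (fun x => if x = x0 then 1 else 0) 0 L fun _ => mask := by
  have h := sum_mul_chainExpect (μ := p2Dist D G2 mask) (K := p2Kernel D G2 mask)
    (f := fun x => if x = x0 then 1 else 0) (fun _ _ => rfl) L 0
  simpa [p2Dist] using h.symm

theorem p2LowerKernel_pos_and_log_eq {j k : ℕ} {x w : Fin L → V} (hw : w ∈ XSet mask x0 j)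
    (hD : ∀ i ∈ unmaskedSet mask w, 0 < D x i (x0 i)) (hF : 0 < FP2 D G2 mask (k + 1) x w) :
    0 < p2LowerKernel D G2 mask k x w ∧ Real.log (p2LowerKernel D G2 mask k x w)
      = ∑ i ∈ unmaskedSet mask w, Real.log (D x i (x0 i))
        + Real.log (FP2 D G2 mask (k + 1) x w) := by
  have hprod : ∏ i ∈ unmaskedSet mask w, D x i (w i) = ∏ i ∈ unmaskedSet mask w, D x i (x0 i) :=
    prod_congr rfl fun i hi => by rw [eq_of_mem_XSet_of_mem_unmaskedSet hw hi]
  rw [p2LowerKernel, hprod]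
  exact ⟨mul_pos (prod_pos hD) hF, by
    rw [Real.log_mul (prod_pos hD).ne' hF.ne', Real.log_prod fun i hi => (hD i hi).ne']⟩

theorem refKernelP2_pos_iff {k : ℕ} {x w : Fin L → V} :
    0 < refKernelP2 G2 mask x0 k x w ↔
      w ∈ XSet mask x0 (L - k - 1) ∧ 0 < G2 (k + 1) x0 x (unmaskedSet mask w) := by
  unfold refKernelP2
  split_ifs with hw <;> simp [hw]

theorem sum_refKernelP2_mul_log_ratio_eq (hG20 : ∀ k z x S, 0 ≤ G2 k z x S) {k : ℕ}
    (hpos : ∀ x : Fin L → V, 0 < refDistP2 G2 mask x0 k x →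
      ∀ y ∈ XSet mask x0 (L - k - 1), 0 < G2 (k + 1) x0 x (unmaskedSet mask y) →
        (∀ i ∈ unmaskedSet mask y, 0 < D x i (x0 i)) ∧ 0 < FP2 D G2 mask (k + 1) x y) :
    ∑ x, refDistP2 G2 mask x0 k x * ∑ w, refKernelP2 G2 mask x0 k x w *
        (Real.log (p2LowerKernel D G2 mask k x w) - Real.log (refKernelP2 G2 mask x0 k x w))
      = ∑ x, refDistP2 G2 mask x0 k x * ∑ y ∈ XSet mask x0 (L - k - 1),
            G2 (k + 1) x0 x (unmaskedSet mask y) * ∑ i ∈ unmaskedSet mask y, Real.log (D x i (x0 i))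
        - ∑ x, refDistP2 G2 mask x0 k x * ∑ y ∈ XSet mask x0 (L - k - 1),
            G2 (k + 1) x0 x (unmaskedSet mask y) *
              Real.log (G2 (k + 1) x0 x (unmaskedSet mask y) / FP2 D G2 mask (k + 1) x y) := by
  rw [← sum_sub_distrib]
  refine sum_congr rfl fun x _ => ?_
  rcases (refDistP2_nonneg (mask := mask) (x0 := x0) hG20 k x).eq_or_lt with hx | hx
  · simp [← hx]
  rw [← mul_sub, ← sum_sub_distrib]
  congr 1
  simp only [refKernelP2, ite_mul, zero_mul]
  rw [Fintype.sum_ite_mem]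
  refine sum_congr rfl fun y hy => ?_
  rcases (hG20 (k + 1) x0 x (unmaskedSet mask y)).eq_or_lt with hq | hq
  · simp [← hq]
  obtain ⟨hD, hF⟩ := hpos x hx y hy hq
  rw [if_pos hy, (p2LowerKernel_pos_and_log_eq hy hD hF).2, Real.log_div hq.ne' hF.ne']
  ring

end P2Chains

/-- **Planner-aware ELBO for P2-style planners.**
`log p^{G₂}(x₀) ≥ 𝓔₁(x₀) + 𝓔₂(x₀)` where
`𝓔₁(x₀) = Σ_{k=0}^{L-1} E_{x_k ~ r^{G₂}_k}[Σ_{y ∈ 𝓧_{L-k-1}(x₀)} Cat(C(y); G₂^{k+1}(x₀,x_k)) Σ_{i ∈ C(y)} log Cat(x₀^i; D^i(x_k))]`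
and
`𝓔₂(x₀) = −Σ_{k=0}^{L-1} E_{x_k ~ r^{G₂}_k}[Σ_{y ∈ 𝓧_{L-k-1}(x₀)} Cat(C(y); G₂^{k+1}(x₀,x_k)) log(Cat(C(y); G₂^{k+1}(x₀,x_k)) / F^{k+1}(x_k, y))]`.
The positivity hypothesis `hpos` ensures no `−∞` terms occur, so the extended-real
inequality can be stated over `ℝ`. -/
theorem p2_planner_aware_elbo
    {V : Type*} [Fintype V] [DecidableEq V] {L : ℕ}
    (mask : V)
    (D : (Fin L → V) → Fin L → V → ℝ)
    (hD0 : ∀ x i y, 0 ≤ D x i y) (hD1 : ∀ x i, ∑ y, D x i y = 1)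
    (G2 : ℕ → (Fin L → V) → (Fin L → V) → Finset (Fin L) → ℝ)
    (hG20 : ∀ k z x S, 0 ≤ G2 k z x S)
    (hG2card : ∀ k z x S, G2 k z x S ≠ 0 → S.card = k)
    (hG2sum : ∀ k z x, 1 ≤ k → k ≤ L → ∑ S : Finset (Fin L), G2 k z x S = 1)
    (x0 : Fin L → V) (hx0 : ∀ i, x0 i ≠ mask)
    (hpos : ∀ k, k < L → ∀ x : Fin L → V, 0 < refDistP2 G2 mask x0 k x →
      ∀ y ∈ XSet mask x0 (L - k - 1), 0 < G2 (k + 1) x0 x (unmaskedSet mask y) →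
        (∀ i ∈ unmaskedSet mask y, 0 < D x i (x0 i)) ∧
          0 < FP2 D G2 mask (k + 1) x y) :
    Real.log (p2Dist D G2 mask L x0)
      ≥ (∑ k ∈ Finset.range L, ∑ x : Fin L → V, refDistP2 G2 mask x0 k x *
           ∑ y ∈ XSet mask x0 (L - k - 1),
             G2 (k + 1) x0 x (unmaskedSet mask y) *
               ∑ i ∈ unmaskedSet mask y, Real.log (D x i (x0 i)))
        + -(∑ k ∈ Finset.range L, ∑ x : Fin L → V, refDistP2 G2 mask x0 k x *
             ∑ y ∈ XSet mask x0 (L - k - 1),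
               G2 (k + 1) x0 x (unmaskedSet mask y) *
                 Real.log (G2 (k + 1) x0 x (unmaskedSet mask y) /
                   FP2 D G2 mask (k + 1) x y)) := by
  set f : (Fin L → V) → ℝ := fun x => if x = x0 then 1 else 0
  have hf : ∀ x, 0 ≤ f x := fun x => by simp only [f]; split_ifs <;> norm_num
  have hfpos : ∀ x, 0 < refDistP2 G2 mask x0 L x → 0 < f x := fun x hx => by
    simp [f, eq_of_refDistP2_ne_zero hx.ne']
  have hKpos : ∀ k < L, ∀ x w, 0 < refDistP2 G2 mask x0 k x → 0 < refKernelP2 G2 mask x0 k x w →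
      0 < p2LowerKernel D G2 mask k x w := fun k hk x w hx hw => by
    obtain ⟨hw, hq⟩ := refKernelP2_pos_iff.1 hw
    exact (p2LowerKernel_pos_and_log_eq hw (hpos k hk x hx w hw hq).1 (hpos k hk x hx w hw hq).2).1
  have hr := refDistP2_nonneg (mask := mask) (x0 := x0) hG20
  have hK' := p2LowerKernel_nonneg (mask := mask) hD0 hG20
  have hQsum : ∀ k < L, ∀ x, ∑ w, refKernelP2 G2 mask x0 k x w = 1 := fun k hk =>
    sum_refKernelP2 hG2card hG2sum hx0 hk
  have hstart : 0 < refDistP2 G2 mask x0 0 fun _ => mask := by simp [refDistP2]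
  rw [ge_iff_le, ← sub_eq_add_neg, ← sum_sub_distrib, p2Dist_eq_chainExpect]
  calc _ = ∑ k ∈ range L, ∑ x, refDistP2 G2 mask x0 k x * ∑ w, refKernelP2 G2 mask x0 k x w *
          (Real.log (p2LowerKernel D G2 mask k x w) - Real.log (refKernelP2 G2 mask x0 k x w))
        + ∑ x, refDistP2 G2 mask x0 L x * Real.log (f x) := by
        rw [sum_congr rfl fun k hk =>
          sum_refKernelP2_mul_log_ratio_eq hG20 (hpos k (mem_range.1 hk))]
        -- the last sum vanishes because `Real.log 1 = Real.log 0 = 0`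
        simp [f, apply_ite Real.log]
    _ ≤ ∑ x, refDistP2 G2 mask x0 0 x * Real.log (chainExpect (p2LowerKernel D G2 mask) f 0 L x) :=
        sum_mul_log_chainExpect_ge hr (refKernelP2_nonneg hG20) hQsum refDistP2_succ_eq_sum hK' hf
          hKpos hfpos
    _ = Real.log (chainExpect (p2LowerKernel D G2 mask) f 0 L fun _ => mask) := by
        simp [refDistP2]
    _ ≤ _ := Real.log_le_log (chainExpect_pos hr (refKernelP2_nonneg hG20) hQsum
          refDistP2_succ_eq_sum hK' hf hKpos hfpos L 0 (zero_add L) _ hstart)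
        (chainExpect_mono hK' (p2LowerKernel_le_p2Kernel hD0 hD1 hG20) hf L 0 _)
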